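/- arXiv:2402.07356 — 2 statements merged into one kernel-verified Lean document; each statement's English description precedes it below -/
import Mathlib

section
/- With $Y_{w,v}$ and $X_{w,v}$ as in the previous setup (for arbitrary functions $\alpha_\ell: \mathbb{R}^d \to \mathbb{R}^d$, $\beta_\ell: \mathbb{R}^{n_\ell} \to \mathbb{R}^{n_\ell}$, and independent standard Gaussian $G_\ell$, $\gamma_\ell$, $g_\ell$, $h_\ell$), for all $w,w' \in \mathbb{R}^d$ and $v,v'$ with $v_\ell, v'_\ell \in \mathbb{R}^{n_\ell}$ one has $\mathbb{E}[Y_{w,v}Y_{w',v'}] - \mathbb{E}[X_{w,v}X_{w',v'}] = \sum_{\ell=1}^k (\beta_\ell(v_\ell)^T\beta_\ell(v'_\ell) - \|\beta_\ell(v_\ell)\|_2\|\beta_\ell(v'_\ell)\|_2)(\alpha_\ell(w)^T\alpha_\ell(w') - \|\alpha_\ell(w)\|_2\|\alpha_\ell(w')\|_2) \ge 0$. Moreover, this difference equals zero whenever $w = w'$ or $v = v'$. Consequently, the pair $(Y, X)$ satisfies Gordon's three comparison conditions: $\mathbb{E}Y_{w,v}^2 = \mathbb{E}X_{w,v}^2$;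 $\mathbb{E}[X_{w,v}X_{w,v'}] \ge \mathbb{E}[Y_{w,v}Y_{w,v'}]$ for all $v,v'$; and $\mathbb{E}[X_{w,v}X_{w',v'}] \le \mathbb{E}[Y_{w,v}Y_{w',v'}]$ for all $w \ne w'$ and all $v,v'$. -/
open MeasureTheory ProbabilityTheory


open Real Filter Asymptotics
open scoped ENNReal NNReal

namespace SlepianAux

lemma odd_int : ∫ x : ℝ, x * rexp (-x^2/2) = 0 := by
  have h := MeasureTheory.integral_neg_eq_self (fun x : ℝ => x * rexp (-x^2/2)) volume
  have h2 : (fun x : ℝ => (-x) * rexp (-(-x)^2/2)) = fun x : ℝ => -(x * rexp (-x^2/2)) := by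
    ext x; ring_nf
  rw [h2, integral_neg] at h
  linarith


lemma exp_int : ∫ x : ℝ, rexp (-x^2/2) = √(2*π) := by
  have h := integral_gaussian (1/2)
  have : (fun x : ℝ => rexp (-x^2/2)) = fun x => rexp (-(1/2) * x^2) := by
    ext x; ring_nf
  rw [this, h]; norm_num; ring

lemma hasDeriv (x : ℝ) :
    HasDerivAt (fun x : ℝ => -x * rexp (-x^2/2)) ((x^2 - 1) * rexp (-x^2/2)) x := by
  have h1 : HasDerivAt (fun x : ℝ => -x^2/2) (-x) x := by
    have := ((hasDerivAt_pow 2 x).neg).div_const 2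
    exact this.congr_deriv (by push_cast; ring)
  have h2 : HasDerivAt (fun x : ℝ => rexp (-x^2/2)) (rexp (-x^2/2) * (-x)) x := h1.exp
  have := (hasDerivAt_id x).neg.mul h2
  exact this.congr_deriv (by simp [id]; ring)

lemma tends_top : Tendsto (fun x : ℝ => -x * rexp (-x^2/2)) atTop (nhds 0) := by
  have h := rpow_mul_exp_neg_mul_sq_isLittleO_exp_neg (b := 1/2) (by norm_num) 1
  have h2 : Tendsto (fun x : ℝ => rexp (-(1/2) * x)) atTop (nhds 0) := by
    have hd : Tendsto (fun x : ℝ => -(1/2) * x) atTop atBot := by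
      have e : (fun x : ℝ => -(1/2) * x) = fun x : ℝ => -((1/2) * x) := by ext x; ring
      rw [e]
      exact tendsto_neg_atBot_iff.mpr
        (tendsto_id.const_mul_atTop (show (0:ℝ) < 1/2 by norm_num))
    exact Real.tendsto_exp_atBot.comp hd
  have h3 := h.isBigO.trans_tendsto h2
  have : (fun x : ℝ => -x * rexp (-x^2/2)) =ᶠ[atTop] fun x => -(x ^ (1:ℝ) * rexp (-(1/2) * x^2)) := by
    filter_upwards [eventually_gt_atTop (0:ℝ)] with x hx
    rw [Real.rpow_one]; ring_nf
  rw [Filter.tendsto_congr' this]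
  simpa using h3.neg

lemma integrable_sq : Integrable (fun x : ℝ => x^2 * rexp (-x^2/2)) := by
  have h := integrable_rpow_mul_exp_neg_mul_sq (b := 1/2) (by norm_num) (s := 2) (by norm_num)
  have : (fun x : ℝ => x ^ (2:ℝ) * rexp (-(1/2) * x^2)) = fun x => x^2 * rexp (-x^2/2) := by
    ext x
    rw [show ((2:ℝ) = ((2:ℕ):ℝ)) by norm_num, Real.rpow_natCast]
    ring_nf
  rwa [this] at h

lemma integrable_exp' : Integrable (fun x : ℝ => rexp (-x^2/2)) := by
  have h := integrable_exp_neg_mul_sq (b := 1/2) (by norm_num)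
  have : (fun x : ℝ => rexp (-(1/2) * x^2)) = fun x => rexp (-x^2/2) := by
    ext x; ring_nf
  rwa [this] at h

lemma integrable_lin : Integrable (fun x : ℝ => x * rexp (-x^2/2)) := by
  have h := integrable_mul_exp_neg_mul_sq (b := 1/2) (by norm_num)
  have : (fun x : ℝ => x * rexp (-(1/2) * x^2)) = fun x => x * rexp (-x^2/2) := by
    ext x; ring_nf
  rwa [this] at h

lemma integrable_parts : Integrable (fun x : ℝ => (x^2 - 1) * rexp (-x^2/2)) := by
  refine (integrable_sq.sub integrable_exp').congr ?_
  filter_upwards with x; simp [sub_mul]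

lemma parts_int : ∫ x : ℝ, (x^2 - 1) * rexp (-x^2/2) = 0 := by
  have hio : ∫ x in Set.Ioi (0:ℝ), (x^2 - 1) * rexp (-x^2/2) = 0 - (-0 * rexp (-0^2/2)) :=
    integral_Ioi_of_hasDerivAt_of_tendsto' (fun x _ => hasDeriv x)
      integrable_parts.integrableOn tends_top
  have hic : ∫ x in Set.Iic (0:ℝ), (x^2 - 1) * rexp (-x^2/2) = (-0 * rexp (-0^2/2)) - 0 :=
    integral_Iic_of_hasDerivAt_of_tendsto' (fun x _ => hasDeriv x)
      integrable_parts.integrableOn (by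
        have h := (tends_top.comp tendsto_neg_atBot_atTop).neg
        have e : (fun x : ℝ => -((fun x : ℝ => -x * rexp (-x^2/2)) ∘ Neg.neg) x)
            = fun x : ℝ => -x * rexp (-x^2/2) := by
          ext x; simp [Function.comp]
        rw [e] at h
        simpa using h)
  have := intervalIntegral.integral_Iic_add_Ioi (μ := volume) (b := (0:ℝ))
    (f := fun x : ℝ => (x^2 - 1) * rexp (-x^2/2)) integrable_parts.integrableOn
    integrable_parts.integrableOn
  rw [hio, hic] at this
  simpa using this.symm

lemma sq_int : ∫ x : ℝ, x^2 * rexp (-x^2/2) = √(2*π) := by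
  have h : ∫ x : ℝ, ((x^2 - 1) * rexp (-x^2/2) + rexp (-x^2/2)) = 0 + √(2*π) := by
    rw [integral_add integrable_parts integrable_exp', parts_int, exp_int]
  have e : (fun x : ℝ => ((x^2 - 1) * rexp (-x^2/2) + rexp (-x^2/2))) =
      fun x => x^2 * rexp (-x^2/2) := by ext x; ring
  rw [e] at h; simpa using h






lemma gpdf_eq (x : ℝ) : gaussianPDFReal 0 1 x = (√(2*π))⁻¹ * rexp (-x^2/2) := by
  simp [gaussianPDFReal]

lemma gauss_eq_wd : gaussianReal 0 1 =
    volume.withDensity (fun x => ((gaussianPDFReal 0 1 x).toNNReal : ℝ≥0∞)) := by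
  rw [gaussianReal_of_var_ne_zero 0 one_ne_zero]
  rfl

lemma gauss_integral (g : ℝ → ℝ) :
    ∫ x, g x ∂(gaussianReal 0 1) = ∫ x, gaussianPDFReal 0 1 x * g x := by
  rw [gauss_eq_wd, integral_withDensity_eq_integral_smul
    ((measurable_gaussianPDFReal 0 1).real_toNNReal) g]
  congr 1; ext x
  rw [NNReal.smul_def, smul_eq_mul, Real.coe_toNNReal _ (gaussianPDFReal_nonneg 0 1 x)]

lemma sqrt2pi_ne : (√(2*π)) ≠ 0 := by
  positivity

lemma gauss_mean : ∫ x, x ∂(gaussianReal 0 1) = 0 := by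
  rw [gauss_integral]
  simp only [gpdf_eq]
  have : (fun x : ℝ => (√(2*π))⁻¹ * rexp (-x^2/2) * x)
      = fun x => (√(2*π))⁻¹ * (x * rexp (-x^2/2)) := by ext x; ring
  rw [this, integral_const_mul, odd_int, mul_zero]

lemma gauss_second : ∫ x, x^2 ∂(gaussianReal 0 1) = 1 := by
  rw [gauss_integral]
  simp only [gpdf_eq]
  have : (fun x : ℝ => (√(2*π))⁻¹ * rexp (-x^2/2) * x^2)
      = fun x => (√(2*π))⁻¹ * (x^2 * rexp (-x^2/2)) := by ext x; ring
  rw [this, integral_const_mul, sq_int, inv_mul_cancel₀ sqrt2pi_ne]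

lemma gauss_int_sq : Integrable (fun x : ℝ => x^2) (gaussianReal 0 1) := by
  rw [gauss_eq_wd, integrable_withDensity_iff_integrable_smul
    ((measurable_gaussianPDFReal 0 1).real_toNNReal)]
  refine (integrable_sq.const_mul ((√(2*π))⁻¹)).congr ?_
  filter_upwards with x
  rw [NNReal.smul_def, smul_eq_mul, Real.coe_toNNReal _ (gaussianPDFReal_nonneg 0 1 x), gpdf_eq]
  ring

section
variable {Ω : Type} [MeasureSpace Ω] [IsProbabilityMeasure (ℙ : Measure Ω)]
  {X : Ω → ℝ}

lemma xi_memL2 (hm : Measurable X) (hg : Measure.map X ℙ = gaussianReal 0 1) :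
    MemLp X 2 ℙ := by
  rw [memLp_two_iff_integrable_sq hm.aestronglyMeasurable]
  have : Integrable ((fun x : ℝ => x^2) ∘ X) ℙ := by
    rw [← integrable_map_measure (by rw [hg]; exact (measurable_id.pow_const 2).aestronglyMeasurable)
      hm.aemeasurable, hg]
    exact gauss_int_sq
  exact this

lemma xi_mean (hm : Measurable X) (hg : Measure.map X ℙ = gaussianReal 0 1) :
    ∫ ω, X ω ∂ℙ = 0 := by
  have key := integral_map (μ := ℙ) hm.aemeasurable (f := fun x : ℝ => x)
    measurable_id.aestronglyMeasurable
  rw [hg] at key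
  rw [← key]; exact gauss_mean

lemma xi_sq (hm : Measurable X) (hg : Measure.map X ℙ = gaussianReal 0 1) :
    ∫ ω, (X ω)^2 ∂ℙ = 1 := by
  have key := integral_map (μ := ℙ) hm.aemeasurable (f := fun x : ℝ => x^2)
    (measurable_id.pow_const 2).aestronglyMeasurable
  rw [hg] at key
  rw [← key]; exact gauss_second
end

section
variable {Ω : Type} [MeasureSpace Ω] [IsProbabilityMeasure (ℙ : Measure Ω)]
  {X : Ω → ℝ}


lemma l2_mul {f g : Ω → ℝ} (hf : MemLp f 2 ℙ) (hg : MemLp g 2 ℙ) :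
    Integrable (fun ω => f ω * g ω) ℙ := by
  have h := MemLp.smul (φ := f) (f := g) (p := 2) (q := 2) (r := 1) hg hf (hpqr := ⟨by simp [ENNReal.inv_two_add_inv_two]⟩)
  rw [← memLp_one_iff_integrable]
  have e : (f • g) = fun ω => f ω * g ω := rfl
  rwa [e] at h
end

section
variable {Ω : Type} [MeasureSpace Ω] [IsProbabilityMeasure (ℙ : Measure Ω)]
  {ι : Type} [Fintype ι] [DecidableEq ι]

lemma cov_sum (ξ : ι → Ω → ℝ) (hmeas : ∀ i, Measurable (ξ i))
    (hindep : iIndepFun ξ ℙ)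
    (hgauss : ∀ i, Measure.map (ξ i) ℙ = gaussianReal 0 1)
    (c c' : ι → ℝ) :
    ∫ ω, (∑ i, c i * ξ i ω) * (∑ i, c' i * ξ i ω) ∂ℙ = ∑ i, c i * c' i := by
  have hL2 : ∀ i, MemLp (ξ i) 2 ℙ := fun i => xi_memL2 (hmeas i) (hgauss i)
  have hInt : ∀ i, Integrable (ξ i) ℙ := fun i => ((hL2 i).integrable (by norm_num))
  have hprod : ∀ i j, Integrable (fun ω => ξ i ω * ξ j ω) ℙ := fun i j =>
    l2_mul (hL2 i) (hL2 j)
  have hij : ∀ i j, ∫ ω, ξ i ω * ξ j ω ∂ℙ = if i = j then 1 else 0 := by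
    intro i j
    by_cases h : i = j
    · subst h
      simp only [if_true, ← pow_two]
      exact xi_sq (hmeas i) (hgauss i)
    · rw [if_neg h]
      have hind : IndepFun (ξ i) (ξ j) ℙ := hindep.indepFun h
      have := hind.integral_mul_eq_mul_integral (hInt i).aestronglyMeasurable (hInt j).aestronglyMeasurable
      have e : ∫ ω, ξ i ω * ξ j ω ∂ℙ = ∫ ω, (ξ i * ξ j) ω ∂ℙ := rfl
      rw [e, this, xi_mean (hmeas i) (hgauss i), zero_mul]
  calc ∫ ω, (∑ i, c i * ξ i ω) * (∑ i, c' i * ξ i ω) ∂ℙ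
      = ∫ ω, ∑ i, ∑ j, (c i * c' j) * (ξ i ω * ξ j ω) ∂ℙ := by
        congr 1; ext ω
        rw [Finset.sum_mul_sum]
        exact Finset.sum_congr rfl fun i _ => Finset.sum_congr rfl fun j _ => by ring
    _ = ∑ i, ∑ j, ∫ ω, (c i * c' j) * (ξ i ω * ξ j ω) ∂ℙ := by
        rw [integral_finset_sum]
        · exact Finset.sum_congr rfl fun i _ => integral_finset_sum _
            (fun j _ => ((hprod i j).const_mul _))
        · exact fun i _ => integrable_finset_sum _ fun j _ => ((hprod i j).const_mul _)
    _ = ∑ i, ∑ j, (c i * c' j) * (if i = j then 1 else 0) := by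
        exact Finset.sum_congr rfl fun i _ => Finset.sum_congr rfl fun j _ => by
          rw [integral_const_mul, hij i j]
    _ = ∑ i, c i * c' i := by
        refine Finset.sum_congr rfl fun i _ => ?_
        rw [Finset.sum_eq_single i]
        · simp
        · intro j _ hji; simp [Ne.symm hji]
        · intro hi; simp at hi
end

section coeffs
variable {k d : ℕ} {n : Fin k → ℕ}
  (α : Fin k → EuclideanSpace ℝ (Fin d) → EuclideanSpace ℝ (Fin d))
  (β : (ℓ : Fin k) → EuclideanSpace ℝ (Fin (n ℓ)) → EuclideanSpace ℝ (Fin (n ℓ)))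

/-- coefficient vector of Y -/
noncomputable def slepianCY (w : EuclideanSpace ℝ (Fin d))
    (v : (ℓ : Fin k) → EuclideanSpace ℝ (Fin (n ℓ))) :
    ((Σ ℓ : Fin k, Fin (n ℓ) × Fin d) ⊕
      ((Fin k) ⊕ ((Fin k × Fin d) ⊕ (Σ ℓ : Fin k, Fin (n ℓ))))) → ℝ
  | Sum.inl ⟨ℓ, (i, j)⟩ => β ℓ (v ℓ) i * α ℓ w j
  | Sum.inr (Sum.inl ℓ) => ‖α ℓ w‖ * ‖β ℓ (v ℓ)‖
  | Sum.inr (Sum.inr _) => 0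

/-- coefficient vector of X -/
noncomputable def slepianCX (w : EuclideanSpace ℝ (Fin d))
    (v : (ℓ : Fin k) → EuclideanSpace ℝ (Fin (n ℓ))) :
    ((Σ ℓ : Fin k, Fin (n ℓ) × Fin d) ⊕
      ((Fin k) ⊕ ((Fin k × Fin d) ⊕ (Σ ℓ : Fin k, Fin (n ℓ))))) → ℝ
  | Sum.inl _ => 0
  | Sum.inr (Sum.inl _) => 0
  | Sum.inr (Sum.inr (Sum.inl (ℓ, j))) => ‖β ℓ (v ℓ)‖ * α ℓ w j
  | Sum.inr (Sum.inr (Sum.inr ⟨ℓ, i⟩)) => ‖α ℓ w‖ * β ℓ (v ℓ) i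

variable (w w' : EuclideanSpace ℝ (Fin d))
  (v v' : (ℓ : Fin k) → EuclideanSpace ℝ (Fin (n ℓ)))

lemma inner_eq_sum (x y : EuclideanSpace ℝ (Fin d)) :
    (inner ℝ x y : ℝ) = ∑ j, x j * y j := by
  simp [PiLp.inner_apply, RCLike.inner_apply, conj_trivial, mul_comm]

lemma sum_CY_mul_CY :
    ∑ i, slepianCY α β w v i * slepianCY α β w' v' i
      = ∑ ℓ, ((inner ℝ (β ℓ (v ℓ)) (β ℓ (v' ℓ)) : ℝ) * (inner ℝ (α ℓ w) (α ℓ w') : ℝ)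
          + (‖α ℓ w‖ * ‖β ℓ (v ℓ)‖) * (‖α ℓ w'‖ * ‖β ℓ (v' ℓ)‖)) := by
  simp only [Fintype.sum_sum_type, ← Finset.univ_sigma_univ, Finset.sum_sigma, Fintype.sum_prod_type,
    slepianCY, mul_zero, zero_mul, Finset.sum_const_zero, add_zero]
  rw [← Finset.sum_add_distrib]
  refine Finset.sum_congr rfl fun ℓ _ => ?_
  congr 1
  rw [inner_eq_sum, inner_eq_sum, Finset.sum_mul_sum]
  exact Finset.sum_congr rfl fun i _ => Finset.sum_congr rfl fun j _ => by ring

lemma sum_CX_mul_CX :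
    ∑ i, slepianCX α β w v i * slepianCX α β w' v' i
      = ∑ ℓ, ((‖β ℓ (v ℓ)‖ * ‖β ℓ (v' ℓ)‖) * (inner ℝ (α ℓ w) (α ℓ w') : ℝ)
          + (‖α ℓ w‖ * ‖α ℓ w'‖) * (inner ℝ (β ℓ (v ℓ)) (β ℓ (v' ℓ)) : ℝ)) := by
  simp only [Fintype.sum_sum_type, ← Finset.univ_sigma_univ, Finset.sum_sigma, Fintype.sum_prod_type,
    slepianCX, mul_zero, zero_mul, Finset.sum_const_zero, add_zero, zero_add]
  rw [← Finset.sum_add_distrib]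
  refine Finset.sum_congr rfl fun ℓ _ => ?_
  congr 1
  · rw [inner_eq_sum, Finset.mul_sum]
    exact Finset.sum_congr rfl fun j _ => by ring
  · rw [inner_eq_sum, Finset.mul_sum]
    exact Finset.sum_congr rfl fun i _ => by ring
end coeffs

end SlepianAux

open SlepianAux

/-- For the processes
`Y_{w,v} = ∑_ℓ [β_ℓ(v_ℓ)ᵀ G_ℓ α_ℓ(w) + γ_ℓ ‖α_ℓ(w)‖‖β_ℓ(v_ℓ)‖]` and
`X_{w,v} = ∑_ℓ [‖β_ℓ(v_ℓ)‖ α_ℓ(w)ᵀ g_ℓ + ‖α_ℓ(w)‖ h_ℓᵀ β_ℓ(v_ℓ)]`,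
the covariance gap
`𝔼[Y_{w,v}Y_{w',v'}] − 𝔼[X_{w,v}X_{w',v'}]
  = ∑_ℓ (β_ℓ(v_ℓ)ᵀβ_ℓ(v'_ℓ) − ‖β_ℓ(v_ℓ)‖‖β_ℓ(v'_ℓ)‖)(α_ℓ(w)ᵀα_ℓ(w') − ‖α_ℓ(w)‖‖α_ℓ(w')‖) ≥ 0`,
vanishing when `w = w'` or `v = v'`; hence Gordon's three comparison conditions hold. -/
theorem generalized_slepian_pair_gordon_conditions
    {Ω : Type} [MeasureSpace Ω] [IsProbabilityMeasure (ℙ : Measure Ω)]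
    {k d : ℕ} {n : Fin k → ℕ}
    (ξ : ((Σ ℓ : Fin k, Fin (n ℓ) × Fin d) ⊕
          ((Fin k) ⊕ ((Fin k × Fin d) ⊕ (Σ ℓ : Fin k, Fin (n ℓ))))) → Ω → ℝ)
    (hmeas : ∀ i, Measurable (ξ i))
    (hindep : iIndepFun ξ ℙ)
    (hgauss : ∀ i, Measure.map (ξ i) ℙ = gaussianReal 0 1)
    (G : (ℓ : Fin k) → Ω → Matrix (Fin (n ℓ)) (Fin d) ℝ)
    (γ : Fin k → Ω → ℝ)
    (g : Fin k → Ω → EuclideanSpace ℝ (Fin d))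
    (h : (ℓ : Fin k) → Ω → EuclideanSpace ℝ (Fin (n ℓ)))
    (hG : ∀ ℓ ω i j, G ℓ ω i j = ξ (Sum.inl ⟨ℓ, (i, j)⟩) ω)
    (hγ : ∀ ℓ ω, γ ℓ ω = ξ (Sum.inr (Sum.inl ℓ)) ω)
    (hg : ∀ ℓ ω j, g ℓ ω j = ξ (Sum.inr (Sum.inr (Sum.inl (ℓ, j)))) ω)
    (hh : ∀ ℓ ω i, h ℓ ω i = ξ (Sum.inr (Sum.inr (Sum.inr ⟨ℓ, i⟩))) ω)
    (α : Fin k → EuclideanSpace ℝ (Fin d) → EuclideanSpace ℝ (Fin d))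
    (β : (ℓ : Fin k) → EuclideanSpace ℝ (Fin (n ℓ)) → EuclideanSpace ℝ (Fin (n ℓ)))
    (X Y : EuclideanSpace ℝ (Fin d) →
      ((ℓ : Fin k) → EuclideanSpace ℝ (Fin (n ℓ))) → Ω → ℝ)
    (hY : ∀ w v ω, Y w v ω = ∑ ℓ,
      ((∑ i, ∑ j, β ℓ (v ℓ) i * G ℓ ω i j * α ℓ w j)
        + γ ℓ ω * ‖α ℓ w‖ * ‖β ℓ (v ℓ)‖))
    (hX : ∀ w v ω, X w v ω = ∑ ℓ,
      (‖β ℓ (v ℓ)‖ * (∑ j, α ℓ w j * g ℓ ω j)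
        + ‖α ℓ w‖ * (∑ i, h ℓ ω i * β ℓ (v ℓ) i))) :
    (∀ (w w' : EuclideanSpace ℝ (Fin d))
        (v v' : (ℓ : Fin k) → EuclideanSpace ℝ (Fin (n ℓ))),
        (∫ ω, Y w v ω * Y w' v' ω ∂ℙ) - (∫ ω, X w v ω * X w' v' ω ∂ℙ)
          = ∑ ℓ, ((inner ℝ (β ℓ (v ℓ)) (β ℓ (v' ℓ)) : ℝ) - ‖β ℓ (v ℓ)‖ * ‖β ℓ (v' ℓ)‖)
              * ((inner ℝ (α ℓ w) (α ℓ w') : ℝ) - ‖α ℓ w‖ * ‖α ℓ w'‖))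
    ∧ (∀ (w w' : EuclideanSpace ℝ (Fin d))
        (v v' : (ℓ : Fin k) → EuclideanSpace ℝ (Fin (n ℓ))),
        0 ≤ (∫ ω, Y w v ω * Y w' v' ω ∂ℙ) - (∫ ω, X w v ω * X w' v' ω ∂ℙ))
    ∧ (∀ (w : EuclideanSpace ℝ (Fin d))
        (v v' : (ℓ : Fin k) → EuclideanSpace ℝ (Fin (n ℓ))),
        (∫ ω, Y w v ω * Y w v' ω ∂ℙ) - (∫ ω, X w v ω * X w v' ω ∂ℙ) = 0)
    ∧ (∀ (w w' : EuclideanSpace ℝ (Fin d))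
        (v : (ℓ : Fin k) → EuclideanSpace ℝ (Fin (n ℓ))),
        (∫ ω, Y w v ω * Y w' v ω ∂ℙ) - (∫ ω, X w v ω * X w' v ω ∂ℙ) = 0)
    ∧ (∀ (w : EuclideanSpace ℝ (Fin d))
        (v : (ℓ : Fin k) → EuclideanSpace ℝ (Fin (n ℓ))),
        (∫ ω, (Y w v ω) ^ 2 ∂ℙ) = ∫ ω, (X w v ω) ^ 2 ∂ℙ)
    ∧ (∀ (w : EuclideanSpace ℝ (Fin d))
        (v v' : (ℓ : Fin k) → EuclideanSpace ℝ (Fin (n ℓ))),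
        (∫ ω, Y w v ω * Y w v' ω ∂ℙ) ≤ ∫ ω, X w v ω * X w v' ω ∂ℙ)
    ∧ (∀ (w w' : EuclideanSpace ℝ (Fin d))
        (v v' : (ℓ : Fin k) → EuclideanSpace ℝ (Fin (n ℓ))), w ≠ w' →
        (∫ ω, X w v ω * X w' v' ω ∂ℙ) ≤ ∫ ω, Y w v ω * Y w' v' ω ∂ℙ) := by
  classical
  have repY : ∀ w v ω, Y w v ω = ∑ i, slepianCY α β w v i * ξ i ω := by
    intro w v ω
    rw [hY]
    simp only [Fintype.sum_sum_type, ← Finset.univ_sigma_univ, Finset.sum_sigma,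
      Fintype.sum_prod_type, slepianCY, zero_mul, Finset.sum_const_zero, add_zero]
    rw [Finset.sum_add_distrib]
    congr 1
    · exact Finset.sum_congr rfl fun ℓ _ => Finset.sum_congr rfl fun i _ =>
        Finset.sum_congr rfl fun j _ => by rw [hG]; ring
    · exact Finset.sum_congr rfl fun ℓ _ => by rw [hγ]; ring
  have repX : ∀ w v ω, X w v ω = ∑ i, slepianCX α β w v i * ξ i ω := by
    intro w v ω
    rw [hX]
    simp only [Fintype.sum_sum_type, ← Finset.univ_sigma_univ, Finset.sum_sigma,
      Fintype.sum_prod_type, slepianCX, zero_mul, Finset.sum_const_zero, add_zero, zero_add]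
    rw [Finset.sum_add_distrib]
    congr 1
    · refine Finset.sum_congr rfl fun ℓ _ => ?_
      rw [Finset.mul_sum]
      exact Finset.sum_congr rfl fun j _ => by rw [hg]; ring
    · refine Finset.sum_congr rfl fun ℓ _ => ?_
      rw [Finset.mul_sum]
      exact Finset.sum_congr rfl fun i _ => by rw [hh]; ring
  have intY : ∀ w w' v v', ∫ ω, Y w v ω * Y w' v' ω ∂ℙ
      = ∑ ℓ, ((inner ℝ (β ℓ (v ℓ)) (β ℓ (v' ℓ)) : ℝ) * (inner ℝ (α ℓ w) (α ℓ w') : ℝ)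
          + (‖α ℓ w‖ * ‖β ℓ (v ℓ)‖) * (‖α ℓ w'‖ * ‖β ℓ (v' ℓ)‖)) := by
    intro w w' v v'
    have e : ∫ ω, Y w v ω * Y w' v' ω ∂ℙ
        = ∫ ω, (∑ i, slepianCY α β w v i * ξ i ω) * (∑ i, slepianCY α β w' v' i * ξ i ω) ∂ℙ := by
      congr 1; ext ω; rw [repY w v ω, repY w' v' ω]
    rw [e, cov_sum ξ hmeas hindep hgauss, sum_CY_mul_CY]
  have intX : ∀ w w' v v', ∫ ω, X w v ω * X w' v' ω ∂ℙ
      = ∑ ℓ, ((‖β ℓ (v ℓ)‖ * ‖β ℓ (v' ℓ)‖) * (inner ℝ (α ℓ w) (α ℓ w') : ℝ)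
          + (‖α ℓ w‖ * ‖α ℓ w'‖) * (inner ℝ (β ℓ (v ℓ)) (β ℓ (v' ℓ)) : ℝ)) := by
    intro w w' v v'
    have e : ∫ ω, X w v ω * X w' v' ω ∂ℙ
        = ∫ ω, (∑ i, slepianCX α β w v i * ξ i ω) * (∑ i, slepianCX α β w' v' i * ξ i ω) ∂ℙ := by
      congr 1; ext ω; rw [repX w v ω, repX w' v' ω]
    rw [e, cov_sum ξ hmeas hindep hgauss, sum_CX_mul_CX]
  have master : ∀ w w' v v',
      (∫ ω, Y w v ω * Y w' v' ω ∂ℙ) - (∫ ω, X w v ω * X w' v' ω ∂ℙ)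
        = ∑ ℓ, ((inner ℝ (β ℓ (v ℓ)) (β ℓ (v' ℓ)) : ℝ) - ‖β ℓ (v ℓ)‖ * ‖β ℓ (v' ℓ)‖)
            * ((inner ℝ (α ℓ w) (α ℓ w') : ℝ) - ‖α ℓ w‖ * ‖α ℓ w'‖) := by
    intro w w' v v'
    rw [intY, intX, ← Finset.sum_sub_distrib]
    exact Finset.sum_congr rfl fun ℓ _ => by ring
  have nonneg : ∀ w w' v v',
      0 ≤ (∫ ω, Y w v ω * Y w' v' ω ∂ℙ) - (∫ ω, X w v ω * X w' v' ω ∂ℙ) := by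
    intro w w' v v'
    rw [master]
    refine Finset.sum_nonneg fun ℓ _ => ?_
    exact mul_nonneg_of_nonpos_of_nonpos
      (sub_nonpos.mpr (real_inner_le_norm _ _))
      (sub_nonpos.mpr (real_inner_le_norm _ _))
  have zerow : ∀ w v v',
      (∫ ω, Y w v ω * Y w v' ω ∂ℙ) - (∫ ω, X w v ω * X w v' ω ∂ℙ) = 0 := by
    intro w v v'
    rw [master]
    refine Finset.sum_eq_zero fun ℓ _ => ?_
    rw [show (inner ℝ (α ℓ w) (α ℓ w) : ℝ) - ‖α ℓ w‖ * ‖α ℓ w‖ = 0 by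
      rw [real_inner_self_eq_norm_mul_norm]; ring]
    ring
  have zerov : ∀ w w' v,
      (∫ ω, Y w v ω * Y w' v ω ∂ℙ) - (∫ ω, X w v ω * X w' v ω ∂ℙ) = 0 := by
    intro w w' v
    rw [master]
    refine Finset.sum_eq_zero fun ℓ _ => ?_
    rw [show (inner ℝ (β ℓ (v ℓ)) (β ℓ (v ℓ)) : ℝ) - ‖β ℓ (v ℓ)‖ * ‖β ℓ (v ℓ)‖ = 0 by
      rw [real_inner_self_eq_norm_mul_norm]; ring]
    ring
  refine ⟨master, nonneg, zerow, zerov, ?_, ?_, ?_⟩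
  · intro w v
    have := zerow w v v
    have e1 : ∫ ω, (Y w v ω) ^ 2 ∂ℙ = ∫ ω, Y w v ω * Y w v ω ∂ℙ := by
      congr 1; ext ω; ring
    have e2 : ∫ ω, (X w v ω) ^ 2 ∂ℙ = ∫ ω, X w v ω * X w v ω ∂ℙ := by
      congr 1; ext ω; ring
    rw [e1, e2]
    linarith
  · intro w v v'
    have := zerow w v v'
    linarith
  · intro w w' v v' _
    have := nonneg w w' v v'
    linarith
end

section
/- (Lipschitz continuity of the auxiliary value.) Let $\mathcal{S}_w \subset \mathbb{R}^d$ and $\mathcal{S}_v = \prod_{\ell=1}^k \mathcal{S}_{v_\ell} \subset \prod_\ell \mathbb{R}^{n_\ell}$ be compact, $\psi: \mathcal{S}_w \times \mathcal{S}_v \to \mathbb{R}$ continuous, and $\Sigma_1^{1/2}, \dots, \Sigma_k^{1/2}$ PSD $d\times d$ matrices. Define $\phi(g,h) = \min_{w \in \mathcal{S}_w} \max_{v \in \mathcal{S}_v} \sum_{\ell=1}^k \|v_\ell\|_2\, w^T \Sigma_\ell^{1/2} g_\ell + v_\ell^T h_\ell \|\Sigma_\ell^{1/2} w\|_2 + \psi(w,v)$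 as a function of $(g,h) = (g_1,\dots,g_k,h_1,\dots,h_k) \in \mathbb{R}^{kd} \times \mathbb{R}^{n_1+\dots+n_k}$. Then $\phi$ is Lipschitz with constant $\sqrt{2}\,\sigma R_w R_v$, i.e. $|\phi(g_2,h_2) - \phi(g_1,h_1)| \le \sqrt{2}\,\sigma R_w R_v \sqrt{\sum_{\ell=1}^k \|g_{1\ell} - g_{2\ell}\|_2^2 + \|h_{1\ell} - h_{2\ell}\|_2^2}$, where $\sigma = \max_\ell \|\Sigma_\ell^{1/2}\|_{op}$, $R_w = \max_{w \in \mathcal{S}_w} \|w\|_2$, and $R_v = \max_{v \in \mathcal{S}_v} \|v\|_2$. -/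
open MeasureTheory

/-- The ℓ²→ℓ² operator (spectral) norm of a real matrix. -/
noncomputable def matrixOpNorm {m n : ℕ} (M : Matrix (Fin m) (Fin n) ℝ) : ℝ :=
  ‖LinearMap.toContinuousLinearMap (Matrix.toEuclideanLin M)‖

/-- Regard a plain vector as a point of Euclidean space (to take its `ℓ²` norm). -/
def toEuc {d : ℕ} (x : Fin d → ℝ) : EuclideanSpace ℝ (Fin d) := WithLp.toLp 2 x

/-- Lipschitz continuity of the auxiliary value: the map
`(g,h) ↦ φ(g,h) = min_{S_w} max_{S_v} ∑_ℓ ‖v_ℓ‖ wᵀΣ_ℓ^{1/2}g_ℓ + v_ℓᵀh_ℓ ‖Σ_ℓ^{1/2}w‖ + ψ(w,v)`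
is Lipschitz with constant `√2 σ R_w R_v`, where `σ = max_ℓ ‖Σ_ℓ^{1/2}‖_op`,
`R_w = max_{w ∈ S_w} ‖w‖`, `R_v = max_{v ∈ S_v} ‖v‖`. -/
theorem auxiliary_value_lipschitz
    {k d : ℕ} {n : Fin k → ℕ} (σ Rw Rv : ℝ)
    (Sw : Set (EuclideanSpace ℝ (Fin d)))
    (Sv : (ℓ : Fin k) → Set (EuclideanSpace ℝ (Fin (n ℓ))))
    (SvP : Set (PiLp 2 fun ℓ : Fin k => EuclideanSpace ℝ (Fin (n ℓ))))
    (hSvP : SvP = {v | ∀ ℓ, v ℓ ∈ Sv ℓ})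
    (hSwc : IsCompact Sw) (hSvc : ∀ ℓ, IsCompact (Sv ℓ))
    (hSwne : Sw.Nonempty) (hSvne : ∀ ℓ, (Sv ℓ).Nonempty)
    (ψ : EuclideanSpace ℝ (Fin d) →
      (PiLp 2 fun ℓ : Fin k => EuclideanSpace ℝ (Fin (n ℓ))) → ℝ)
    (hψ : ContinuousOn (fun p => ψ p.1 p.2) (Sw ×ˢ SvP))
    (S : Fin k → Matrix (Fin d) (Fin d) ℝ) (hS : ∀ ℓ, (S ℓ).PosSemidef)
    (hσ : ∀ ℓ, matrixOpNorm (S ℓ) ≤ σ)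
    (hRw : ∀ w ∈ Sw, ‖w‖ ≤ Rw) (hRv : ∀ v ∈ SvP, ‖v‖ ≤ Rv)
    (F : (Fin k → EuclideanSpace ℝ (Fin d)) →
      ((ℓ : Fin k) → EuclideanSpace ℝ (Fin (n ℓ))) →
      EuclideanSpace ℝ (Fin d) →
      (PiLp 2 fun ℓ : Fin k => EuclideanSpace ℝ (Fin (n ℓ))) → ℝ)
    (hF : ∀ g h w v, F g h w v =
      (∑ ℓ : Fin k,
        ((‖v ℓ‖ * ∑ j : Fin d, ((S ℓ).mulVec w) j * g ℓ j)
          + (∑ i : Fin (n ℓ), (v ℓ i * h ℓ i : ℝ)) * ‖toEuc ((S ℓ).mulVec w)‖))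
        + ψ w v)
    (φ : (Fin k → EuclideanSpace ℝ (Fin d)) →
      ((ℓ : Fin k) → EuclideanSpace ℝ (Fin (n ℓ))) → ℝ)
    (hφ : ∀ g h, φ g h = ⨅ w : Sw, ⨆ v : SvP, F g h w v) :
    ∀ (g₁ g₂ : Fin k → EuclideanSpace ℝ (Fin d))
      (h₁ h₂ : (ℓ : Fin k) → EuclideanSpace ℝ (Fin (n ℓ))),
      |φ g₂ h₂ - φ g₁ h₁| ≤ Real.sqrt 2 * σ * Rw * Rv *
        Real.sqrt (∑ ℓ : Fin k, (‖g₁ ℓ - g₂ ℓ‖ ^ 2 + ‖h₁ ℓ - h₂ ℓ‖ ^ 2)) := by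
  intro g₁ g₂ h₁ h₂
  have hSvPne : SvP.Nonempty := by
    rw [hSvP]; exact ⟨WithLp.toLp 2 (fun ℓ => (hSvne ℓ).choose), fun ℓ => (hSvne ℓ).choose_spec⟩
  have hSvPc : IsCompact SvP := by
    rw [hSvP]
    have e : ({v | ∀ ℓ, v ℓ ∈ Sv ℓ} :
        Set (PiLp 2 fun ℓ : Fin k => EuclideanSpace ℝ (Fin (n ℓ)))) = WithLp.ofLp ⁻¹' Set.univ.pi Sv := by
      ext v; exact ⟨fun h ℓ _ => h ℓ, fun h ℓ => h ℓ (Set.mem_univ _)⟩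
    rw [e]; exact (PiLp.homeomorph 2 _).isCompact_preimage.2 (isCompact_univ_pi hSvc)
  haveI : Nonempty Sw := hSwne.to_subtype
  haveI : Nonempty SvP := hSvPne.to_subtype
  obtain ⟨w₀, hw₀⟩ := hSwne
  obtain ⟨v₀, hv₀⟩ := hSvPne
  have hRw0 : 0 ≤ Rw := (norm_nonneg w₀).trans (hRw w₀ hw₀)
  have hRv0 : 0 ≤ Rv := (norm_nonneg v₀).trans (hRv v₀ hv₀)
  -- inner product helper
  have habs1 : ∀ (m : ℕ) (u x : EuclideanSpace ℝ (Fin m)),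
      |∑ j, u j * x j| ≤ ‖u‖ * ‖x‖ := by
    intro m u x
    have e : ∑ j, u j * x j = (inner ℝ u x : ℝ) := by
      simp [PiLp.inner_apply, RCLike.inner_apply, mul_comm]
    rw [e]; exact abs_real_inner_le_norm u x
  rcases Nat.eq_zero_or_pos k with hk | hk
  · haveI : IsEmpty (Fin k) := ⟨fun i => absurd i.2 (by omega)⟩
    have hFF : ∀ g h w v, F g h w v = ψ w v := by
      intro g h w v; rw [hF]; simp
    have heq : φ g₂ h₂ = φ g₁ h₁ := by
      rw [hφ, hφ]; simp only [hFF]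
    rw [heq, sub_self, abs_zero]
    simp [Finset.univ_eq_empty]
  -- main case : k > 0
  have hσ0 : 0 ≤ σ := le_trans (norm_nonneg _) (hσ ⟨0, hk⟩)
  have hσRw0 : 0 ≤ σ * Rw := mul_nonneg hσ0 hRw0
  have hmv : ∀ (ℓ : Fin k) (w : EuclideanSpace ℝ (Fin d)), w ∈ Sw →
      ‖toEuc ((S ℓ).mulVec w)‖ ≤ σ * Rw := by
    intro ℓ w hw
    have h1 : ‖toEuc ((S ℓ).mulVec w)‖
        = ‖(LinearMap.toContinuousLinearMap (Matrix.toEuclideanLin (S ℓ))) w‖ := by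
        simp [toEuc, Matrix.toEuclideanLin_apply]
    rw [h1]
    calc ‖(LinearMap.toContinuousLinearMap (Matrix.toEuclideanLin (S ℓ))) w‖
        ≤ matrixOpNorm (S ℓ) * ‖w‖ := ContinuousLinearMap.le_opNorm _ _
      _ ≤ σ * Rw := mul_le_mul (hσ ℓ) (hRw w hw) (norm_nonneg w) hσ0
  set L := Real.sqrt 2 * σ * Rw * Rv *
      Real.sqrt (∑ ℓ : Fin k, (‖g₁ ℓ - g₂ ℓ‖ ^ 2 + ‖h₁ ℓ - h₂ ℓ‖ ^ 2)) with hLdef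
  -- key pointwise bound
  have key : ∀ w ∈ Sw, ∀ v ∈ SvP, |F g₂ h₂ w v - F g₁ h₁ w v| ≤ L := by
    intro w hw v hv
    have expand : F g₂ h₂ w v - F g₁ h₁ w v =
        ∑ ℓ : Fin k, (‖v ℓ‖ * (∑ j : Fin d, ((S ℓ).mulVec w) j * (g₂ ℓ j - g₁ ℓ j))
          + (∑ i : Fin (n ℓ), v ℓ i * (h₂ ℓ i - h₁ ℓ i)) * ‖toEuc ((S ℓ).mulVec w)‖) := by
      rw [hF, hF, add_sub_add_right_eq_sub, ← Finset.sum_sub_distrib]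
      refine Finset.sum_congr rfl fun ℓ _ => ?_
      simp only [mul_sub, sub_mul, Finset.sum_sub_distrib]
      ring
    rw [expand]
    have hterm : ∀ ℓ : Fin k,
        |‖v ℓ‖ * (∑ j : Fin d, ((S ℓ).mulVec w) j * (g₂ ℓ j - g₁ ℓ j))
          + (∑ i : Fin (n ℓ), v ℓ i * (h₂ ℓ i - h₁ ℓ i)) * ‖toEuc ((S ℓ).mulVec w)‖|
        ≤ ‖v ℓ‖ * ((σ * Rw) * (‖g₁ ℓ - g₂ ℓ‖ + ‖h₁ ℓ - h₂ ℓ‖)) := by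
      intro ℓ
      have e1 : |∑ j : Fin d, ((S ℓ).mulVec w) j * (g₂ ℓ j - g₁ ℓ j)|
          ≤ ‖toEuc ((S ℓ).mulVec w)‖ * ‖g₁ ℓ - g₂ ℓ‖ := by
        have := habs1 d (toEuc ((S ℓ).mulVec w)) (g₂ ℓ - g₁ ℓ)
        rw [norm_sub_rev (g₂ ℓ)] at this; exact this
      have e2 : |∑ i : Fin (n ℓ), v ℓ i * (h₂ ℓ i - h₁ ℓ i)|
          ≤ ‖v ℓ‖ * ‖h₁ ℓ - h₂ ℓ‖ := by
        have := habs1 (n ℓ) (v ℓ) (h₂ ℓ - h₁ ℓ)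
        rw [norm_sub_rev (h₂ ℓ)] at this; exact this
      have hu : ‖toEuc ((S ℓ).mulVec w)‖ ≤ σ * Rw := hmv ℓ w hw
      have hu0 : (0:ℝ) ≤ ‖toEuc ((S ℓ).mulVec w)‖ := norm_nonneg _
      calc |‖v ℓ‖ * (∑ j : Fin d, ((S ℓ).mulVec w) j * (g₂ ℓ j - g₁ ℓ j))
            + (∑ i : Fin (n ℓ), v ℓ i * (h₂ ℓ i - h₁ ℓ i)) * ‖toEuc ((S ℓ).mulVec w)‖|
          ≤ ‖v ℓ‖ * |∑ j : Fin d, ((S ℓ).mulVec w) j * (g₂ ℓ j - g₁ ℓ j)|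
            + |∑ i : Fin (n ℓ), v ℓ i * (h₂ ℓ i - h₁ ℓ i)| * ‖toEuc ((S ℓ).mulVec w)‖ := by
            refine (abs_add_le _ _).trans ?_
            rw [abs_mul, abs_mul, abs_of_nonneg (norm_nonneg (v ℓ)), abs_of_nonneg hu0]
        _ ≤ ‖v ℓ‖ * (‖toEuc ((S ℓ).mulVec w)‖ * ‖g₁ ℓ - g₂ ℓ‖)
            + (‖v ℓ‖ * ‖h₁ ℓ - h₂ ℓ‖) * ‖toEuc ((S ℓ).mulVec w)‖ :=
            add_le_add (mul_le_mul_of_nonneg_left e1 (norm_nonneg _))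
              (mul_le_mul_of_nonneg_right e2 hu0)
        _ = ‖v ℓ‖ * (‖toEuc ((S ℓ).mulVec w)‖ * (‖g₁ ℓ - g₂ ℓ‖ + ‖h₁ ℓ - h₂ ℓ‖)) := by ring
        _ ≤ ‖v ℓ‖ * ((σ * Rw) * (‖g₁ ℓ - g₂ ℓ‖ + ‖h₁ ℓ - h₂ ℓ‖)) :=
            mul_le_mul_of_nonneg_left
              (mul_le_mul_of_nonneg_right hu (by positivity)) (norm_nonneg _)
    have hCS : (∑ ℓ : Fin k, ‖v ℓ‖ * ((σ * Rw) * (‖g₁ ℓ - g₂ ℓ‖ + ‖h₁ ℓ - h₂ ℓ‖)))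
        ≤ Real.sqrt (∑ ℓ : Fin k, ‖v ℓ‖ ^ 2) *
          Real.sqrt (∑ ℓ : Fin k, ((σ * Rw) * (‖g₁ ℓ - g₂ ℓ‖ + ‖h₁ ℓ - h₂ ℓ‖)) ^ 2) :=
      Real.sum_mul_le_sqrt_mul_sqrt _ _ _
    have hnv : Real.sqrt (∑ ℓ : Fin k, ‖v ℓ‖ ^ 2) ≤ Rv := by
      have e : Real.sqrt (∑ ℓ : Fin k, ‖v ℓ‖ ^ 2) = ‖v‖ := by
        rw [← PiLp.norm_sq_eq_of_L2, Real.sqrt_sq (norm_nonneg v)]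
      rw [e]; exact hRv v hv
    have h1 : (∑ ℓ : Fin k, ((σ * Rw) * (‖g₁ ℓ - g₂ ℓ‖ + ‖h₁ ℓ - h₂ ℓ‖)) ^ 2)
        ≤ (σ * Rw) ^ 2 * 2 * ∑ ℓ : Fin k, (‖g₁ ℓ - g₂ ℓ‖ ^ 2 + ‖h₁ ℓ - h₂ ℓ‖ ^ 2) := by
      rw [Finset.mul_sum]
      refine Finset.sum_le_sum fun ℓ _ => ?_
      nlinarith [sq_nonneg (‖g₁ ℓ - g₂ ℓ‖ - ‖h₁ ℓ - h₂ ℓ‖), sq_nonneg (σ * Rw)]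
    have h2 : Real.sqrt (∑ ℓ : Fin k, ((σ * Rw) * (‖g₁ ℓ - g₂ ℓ‖ + ‖h₁ ℓ - h₂ ℓ‖)) ^ 2)
        ≤ (σ * Rw) * (Real.sqrt 2 *
          Real.sqrt (∑ ℓ : Fin k, (‖g₁ ℓ - g₂ ℓ‖ ^ 2 + ‖h₁ ℓ - h₂ ℓ‖ ^ 2))) := by
      refine (Real.sqrt_le_sqrt h1).trans_eq ?_
      rw [mul_assoc ((σ * Rw) ^ 2), Real.sqrt_mul (sq_nonneg _),
        Real.sqrt_sq hσRw0, Real.sqrt_mul (by norm_num : (0:ℝ) ≤ 2)]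
    calc |∑ ℓ : Fin k, (‖v ℓ‖ * (∑ j : Fin d, ((S ℓ).mulVec w) j * (g₂ ℓ j - g₁ ℓ j))
            + (∑ i : Fin (n ℓ), v ℓ i * (h₂ ℓ i - h₁ ℓ i)) * ‖toEuc ((S ℓ).mulVec w)‖)|
        ≤ ∑ ℓ : Fin k, |‖v ℓ‖ * (∑ j : Fin d, ((S ℓ).mulVec w) j * (g₂ ℓ j - g₁ ℓ j))
            + (∑ i : Fin (n ℓ), v ℓ i * (h₂ ℓ i - h₁ ℓ i)) * ‖toEuc ((S ℓ).mulVec w)‖| :=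
          Finset.abs_sum_le_sum_abs _ _
      _ ≤ ∑ ℓ : Fin k, ‖v ℓ‖ * ((σ * Rw) * (‖g₁ ℓ - g₂ ℓ‖ + ‖h₁ ℓ - h₂ ℓ‖)) :=
          Finset.sum_le_sum fun ℓ _ => hterm ℓ
      _ ≤ Real.sqrt (∑ ℓ : Fin k, ‖v ℓ‖ ^ 2) *
          Real.sqrt (∑ ℓ : Fin k, ((σ * Rw) * (‖g₁ ℓ - g₂ ℓ‖ + ‖h₁ ℓ - h₂ ℓ‖)) ^ 2) := hCS
      _ ≤ Rv * Real.sqrt (∑ ℓ : Fin k, ((σ * Rw) * (‖g₁ ℓ - g₂ ℓ‖ + ‖h₁ ℓ - h₂ ℓ‖)) ^ 2) :=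
          mul_le_mul_of_nonneg_right hnv (Real.sqrt_nonneg _)
      _ ≤ Rv * ((σ * Rw) * (Real.sqrt 2 *
            Real.sqrt (∑ ℓ : Fin k, (‖g₁ ℓ - g₂ ℓ‖ ^ 2 + ‖h₁ ℓ - h₂ ℓ‖ ^ 2)))) :=
          mul_le_mul_of_nonneg_left h2 hRv0
      _ = L := by rw [hLdef]; ring
  -- uniform bound on F
  obtain ⟨C, hC⟩ := (hSwc.prod hSvPc).exists_bound_of_continuousOn hψ
  have hFbound : ∀ g h, ∃ M : ℝ, ∀ w ∈ Sw, ∀ v ∈ SvP, |F g h w v| ≤ M := by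
    intro g h
    refine ⟨∑ ℓ : Fin k, (Rv * ((σ * Rw) * ‖g ℓ‖) + (Rv * ‖h ℓ‖) * (σ * Rw)) + C, ?_⟩
    intro w hw v hv
    have hvl : ∀ ℓ, ‖v ℓ‖ ≤ Rv := by
      intro ℓ
      have h2 : ‖v ℓ‖ ^ 2 ≤ ‖v‖ ^ 2 := by
        conv_rhs => rw [PiLp.norm_sq_eq_of_L2]
        exact Finset.single_le_sum (fun i _ => sq_nonneg ‖v i‖) (Finset.mem_univ ℓ)
      nlinarith [norm_nonneg (v ℓ), norm_nonneg v, hRv v hv]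
    rw [hF]
    have hterm : ∀ ℓ : Fin k,
        |‖v ℓ‖ * (∑ j : Fin d, ((S ℓ).mulVec w) j * g ℓ j)
          + (∑ i : Fin (n ℓ), v ℓ i * h ℓ i) * ‖toEuc ((S ℓ).mulVec w)‖|
        ≤ Rv * ((σ * Rw) * ‖g ℓ‖) + (Rv * ‖h ℓ‖) * (σ * Rw) := by
      intro ℓ
      have e1 := habs1 d (toEuc ((S ℓ).mulVec w)) (g ℓ)
      have e2 := habs1 (n ℓ) (v ℓ) (h ℓ)
      have hu := hmv ℓ w hw
      have hu0 : (0:ℝ) ≤ ‖toEuc ((S ℓ).mulVec w)‖ := norm_nonneg _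
      have hvl0 := norm_nonneg (v ℓ)
      calc |‖v ℓ‖ * (∑ j : Fin d, ((S ℓ).mulVec w) j * g ℓ j)
            + (∑ i : Fin (n ℓ), v ℓ i * h ℓ i) * ‖toEuc ((S ℓ).mulVec w)‖|
          ≤ ‖v ℓ‖ * |∑ j : Fin d, ((S ℓ).mulVec w) j * g ℓ j|
            + |∑ i : Fin (n ℓ), v ℓ i * h ℓ i| * ‖toEuc ((S ℓ).mulVec w)‖ := by
            refine (abs_add_le _ _).trans ?_
            rw [abs_mul, abs_mul, abs_of_nonneg hvl0, abs_of_nonneg hu0]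
        _ ≤ Rv * ((σ * Rw) * ‖g ℓ‖) + (Rv * ‖h ℓ‖) * (σ * Rw) := by
            have b1 : ‖v ℓ‖ * |∑ j : Fin d, ((S ℓ).mulVec w) j * g ℓ j|
                ≤ Rv * ((σ * Rw) * ‖g ℓ‖) := by
              refine mul_le_mul (hvl ℓ) ?_ (abs_nonneg _) hRv0
              exact (e1.trans (mul_le_mul_of_nonneg_right hu (norm_nonneg _)) :)
            have b2 : |∑ i : Fin (n ℓ), v ℓ i * h ℓ i| * ‖toEuc ((S ℓ).mulVec w)‖
                ≤ (Rv * ‖h ℓ‖) * (σ * Rw) := by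
              refine mul_le_mul ?_ hu hu0 (by positivity)
              exact e2.trans (mul_le_mul_of_nonneg_right (hvl ℓ) (norm_nonneg _))
            exact add_le_add b1 b2
    calc |(∑ ℓ : Fin k, (‖v ℓ‖ * (∑ j : Fin d, ((S ℓ).mulVec w) j * g ℓ j)
            + (∑ i : Fin (n ℓ), v ℓ i * h ℓ i) * ‖toEuc ((S ℓ).mulVec w)‖)) + ψ w v|
        ≤ |∑ ℓ : Fin k, (‖v ℓ‖ * (∑ j : Fin d, ((S ℓ).mulVec w) j * g ℓ j)
            + (∑ i : Fin (n ℓ), v ℓ i * h ℓ i) * ‖toEuc ((S ℓ).mulVec w)‖)| + |ψ w v| :=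
          abs_add_le _ _
      _ ≤ (∑ ℓ : Fin k, (Rv * ((σ * Rw) * ‖g ℓ‖) + (Rv * ‖h ℓ‖) * (σ * Rw))) + C := by
          refine add_le_add ((Finset.abs_sum_le_sum_abs _ _).trans
            (Finset.sum_le_sum fun ℓ _ => hterm ℓ)) ?_
          have := hC (w, v) ⟨hw, hv⟩
          rwa [Real.norm_eq_abs] at this
  obtain ⟨M₁, hM₁⟩ := hFbound g₁ h₁
  obtain ⟨M₂, hM₂⟩ := hFbound g₂ h₂
  have bdd₁ : ∀ w : Sw, BddAbove (Set.range fun v : SvP => F g₁ h₁ w v) := fun w =>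
    ⟨M₁, by rintro x ⟨v, rfl⟩; exact (abs_le.1 (hM₁ w w.2 v v.2)).2⟩
  have bdd₂ : ∀ w : Sw, BddAbove (Set.range fun v : SvP => F g₂ h₂ w v) := fun w =>
    ⟨M₂, by rintro x ⟨v, rfl⟩; exact (abs_le.1 (hM₂ w w.2 v v.2)).2⟩
  have bddB₁ : BddBelow (Set.range fun w : Sw => ⨆ v : SvP, F g₁ h₁ w v) :=
    ⟨-M₁, by rintro x ⟨w, rfl⟩
             exact le_ciSup_of_le (bdd₁ w) ⟨v₀, hv₀⟩ (abs_le.1 (hM₁ w w.2 v₀ hv₀)).1⟩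
  have bddB₂ : BddBelow (Set.range fun w : Sw => ⨆ v : SvP, F g₂ h₂ w v) :=
    ⟨-M₂, by rintro x ⟨w, rfl⟩
             exact le_ciSup_of_le (bdd₂ w) ⟨v₀, hv₀⟩ (abs_le.1 (hM₂ w w.2 v₀ hv₀)).1⟩
  have sup₂_le : ∀ w : Sw, (⨆ v : SvP, F g₂ h₂ w v) ≤ (⨆ v : SvP, F g₁ h₁ w v) + L := by
    intro w
    refine ciSup_le fun v => ?_
    have hk1 := (abs_le.1 (key w w.2 v v.2)).2
    have hk2 := le_ciSup (bdd₁ w) v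
    linarith
  have sup₁_le : ∀ w : Sw, (⨆ v : SvP, F g₁ h₁ w v) ≤ (⨆ v : SvP, F g₂ h₂ w v) + L := by
    intro w
    refine ciSup_le fun v => ?_
    have hk1 := (abs_le.1 (key w w.2 v v.2)).1
    have hk2 := le_ciSup (bdd₂ w) v
    linarith
  have upper : (⨅ w : Sw, ⨆ v : SvP, F g₂ h₂ w v)
      ≤ (⨅ w : Sw, ⨆ v : SvP, F g₁ h₁ w v) + L :=
    calc (⨅ w : Sw, ⨆ v : SvP, F g₂ h₂ w v)
        ≤ ⨅ w : Sw, ((⨆ v : SvP, F g₁ h₁ w v) + L) := ciInf_mono bddB₂ sup₂_le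
      _ = (⨅ w : Sw, ⨆ v : SvP, F g₁ h₁ w v) + L := (ciInf_add bddB₁ L).symm
  have lower : (⨅ w : Sw, ⨆ v : SvP, F g₁ h₁ w v)
      ≤ (⨅ w : Sw, ⨆ v : SvP, F g₂ h₂ w v) + L :=
    calc (⨅ w : Sw, ⨆ v : SvP, F g₁ h₁ w v)
        ≤ ⨅ w : Sw, ((⨆ v : SvP, F g₂ h₂ w v) + L) := ciInf_mono bddB₁ sup₁_le
      _ = (⨅ w : Sw, ⨆ v : SvP, F g₂ h₂ w v) + L := (ciInf_add bddB₂ L).symm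
  rw [hφ, hφ]
  exact abs_sub_le_iff.2 ⟨by linarith, by linarith⟩
end
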